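/- The number of equivalence classes of Hermitian self-dual codes of length 22 over F_4 is at least ∏_{i=0}^{10}(2^{2i+1}+1) / (22! · 3^{21}), and this quantity exceeds 397588. -/

import Mathlib

abbrev F4 := GaloisField 2 2

/-- Hermitian inner product on `F4^n`. -/
noncomputable def hIP {n : ℕ} (x y : Fin n → F4) : F4 := ∑ i, x i * (y i) ^ 2

/-- Hamming weight. -/
noncomputable def wt {n : ℕ} (x : Fin n → F4) : ℕ := Nat.card {i : Fin n // x i ≠ 0}

/-- Hermitian dual code. -/
noncomputable def hDual {n : ℕ} (C : Submodule F4 (Fin n → F4)) : Submodule F4 (Fin n → F4) where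
  carrier := {x | ∀ c ∈ C, hIP x c = 0}
  add_mem' := by
    intro a b ha hb c hc
    have h : hIP (a + b) c = hIP a c + hIP b c := by
      simp [hIP, add_mul, Finset.sum_add_distrib]
    simp only [h, ha c hc, hb c hc, add_zero]
  zero_mem' := by intro c hc; simp [hIP]
  smul_mem' := by
    intro r x hx c hc
    have h : hIP (r • x) c = r * hIP x c := by
      simp [hIP, Finset.mul_sum, mul_assoc]
    simp only [h, hx c hc, mul_zero]

/-- Monomial transformation given by permutation `π` and nonzero scalars `s`. -/
noncomputable def monomialMap {n : ℕ} (π : Equiv.Perm (Fin n)) (s : Fin n → F4ˣ) :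
    (Fin n → F4) →ₗ[F4] (Fin n → F4) where
  toFun x := fun i => (s i : F4) * x (π i)
  map_add' := by intro x y; funext i; simp [mul_add]
  map_smul' := by intro r x; funext i; simp [mul_comm, mul_left_comm]

/-- Monomial equivalence of codes. -/
noncomputable def CodeEquiv {n : ℕ} (C C' : Submodule F4 (Fin n → F4)) : Prop :=
  ∃ (π : Equiv.Perm (Fin n)) (s : Fin n → F4ˣ), C.map (monomialMap π s) = C'

/-- Order of the automorphism group (monomial transformations preserving `C`). -/
noncomputable def autCard {n : ℕ} (C : Submodule F4 (Fin n → F4)) : ℕ :=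
  Nat.card {p : Equiv.Perm (Fin n) × (Fin n → F4ˣ) // C.map (monomialMap p.1 p.2) = C}

/-- Direct sum of two codes. -/
noncomputable def dsum {n₁ n₂ : ℕ} (C₁ : Submodule F4 (Fin n₁ → F4)) (C₂ : Submodule F4 (Fin n₂ → F4)) :
    Submodule F4 (Fin (n₁ + n₂) → F4) :=
  (C₁.comap (LinearMap.funLeft F4 F4 (Fin.castAdd n₂))) ⊓
    (C₂.comap (LinearMap.funLeft F4 F4 (Fin.natAdd n₁)))

/-!
Self-dual codes of length `2k` are the Lagrangians of `F₄^{2k}` for the form `⟪x, y⟫ = ∑ xᵢ yᵢ²`.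
The coordinates `2m, 2m + 1` carry a hyperbolic pair `e = (1, 1)`, `f = (ω, ω²)`, and a Lagrangian
`C` of the first `2m` coordinates extends to `2 · 4 ^ m + 1` Lagrangians of the first `2m + 2`:
`C ⊕ ⟨f⟩`, and `σ_z(C) ⊕ ⟨e + z + c f⟩` with `σ_z x = x + ⟪x, z⟫ f`, for `z` modulo `C` and `c` one
of the two roots of `c² + c = ⟪z, z⟫`. They are pairwise distinct: `C = (L + ⟨f⟩) ∩ F₄^{2m}`, and
the vector of `L` pairing to `1` with `f` determines `z` modulo `C` and then `c`. Hence there are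
at least `∏ (2 ^ (2i + 1) + 1)` self-dual codes. A monomial class of codes of length `n + 1` has at
most `(n + 1)! · 3 ^ n` members: scaling all coordinates by a common unit fixes every code, so the
first scalar of a monomial map may be taken to be `1`.
-/

namespace F4

lemma natCard_eq : Nat.card F4 = 4 := GaloisField.card 2 2 (by norm_num)

lemma pow_four (a : F4) : a ^ 4 = a := by
  have := Fintype.ofFinite F4
  have h4 : Fintype.card F4 = 4 := Nat.card_eq_fintype_card.symm.trans natCard_eq
  simpa [h4] using FiniteField.pow_card a

lemma exists_sq_add_self_eq_one : ∃ ω : F4, ω ^ 2 + ω = 1 := by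
  by_contra! h
  have hsurj : Function.Surjective fun b : Bool => if b then (1 : F4) else 0 := by
    intro a
    by_cases ha : a = 0
    · exact ⟨false, by simp [ha]⟩
    · exact ⟨true, by grind [pow_four a, h a]⟩
  have := Nat.card_le_card_of_surjective _ hsurj
  simp [natCard_eq] at this

noncomputable def ω : F4 := exists_sq_add_self_eq_one.choose

lemma ω_sq_add_ω : ω ^ 2 + ω = 1 := exists_sq_add_self_eq_one.choose_spec

lemma card_sq_add_self_eq {a : F4} (ha : a ^ 2 = a) : Nat.card {c : F4 // c ^ 2 + c = a} = 2 := by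
  have hroot : ∃ c : F4, c ^ 2 + c = a := by
    rcases (by grind : a = 0 ∨ a = 1) with rfl | rfl
    exacts [⟨0, by simp⟩, ⟨ω, ω_sq_add_ω⟩]
  obtain ⟨c, hc⟩ := hroot
  refine Nat.card_eq_two_iff.mpr ⟨⟨c, hc⟩, ⟨c + 1, by grind⟩, by simp, ?_⟩
  ext ⟨c', hc'⟩
  simp only [Set.mem_insert_iff, Set.mem_singleton_iff, Subtype.mk.injEq, Set.mem_univ, iff_true]
  grind

end F4

section HermitianProduct

variable {n : ℕ}

lemma hIP_add_left (x y z : Fin n → F4) : hIP (x + y) z = hIP x z + hIP y z := by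
  simp [hIP, add_mul, Finset.sum_add_distrib]

lemma hIP_add_right (x y z : Fin n → F4) : hIP x (y + z) = hIP x y + hIP x z := by
  simp only [hIP, Pi.add_apply, add_sq', CharTwo.two_eq_zero, zero_mul, add_zero,
    mul_add, Finset.sum_add_distrib]

lemma hIP_smul_left (a : F4) (x y : Fin n → F4) : hIP (a • x) y = a * hIP x y := by
  simp [hIP, Finset.mul_sum, mul_assoc]

lemma hIP_smul_right (a : F4) (x y : Fin n → F4) : hIP x (a • y) = a ^ 2 * hIP x y := by
  simp only [hIP, Finset.mul_sum, Pi.smul_apply, smul_eq_mul]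
  exact Finset.sum_congr rfl fun _ _ => by ring

lemma hIP_zero_left (y : Fin n → F4) : hIP 0 y = 0 := by simp [hIP]

lemma hIP_comm (x y : Fin n → F4) : hIP y x = hIP x y ^ 2 := by
  rw [hIP, hIP, sum_pow_char]
  refine Finset.sum_congr rfl fun i _ => ?_
  rw [mul_pow, ← pow_mul, F4.pow_four, mul_comm]

lemma hIP_eq_zero_comm {x y : Fin n → F4} : hIP y x = 0 ↔ hIP x y = 0 := by
  rw [hIP_comm, pow_eq_zero_iff two_ne_zero]

lemma hIP_self_sq (x : Fin n → F4) : hIP x x ^ 2 = hIP x x := (hIP_comm x x).symm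

lemma hIP_eq_zero_of_disjoint {x y : Fin n → F4} (h : ∀ k, x k = 0 ∨ y k = 0) : hIP x y = 0 :=
  Finset.sum_eq_zero fun k _ => by rcases h k with h | h <;> simp [h]

lemma natCard_submodule (W : Submodule F4 (Fin n → F4)) :
    Nat.card W = 4 ^ Module.finrank F4 W := by
  rw [Module.natCard_eq_pow_finrank (K := F4), F4.natCard_eq]

lemma hIP_eq_dotProduct (x y : Fin n → F4) : hIP x y = (frobenius F4 2 ∘ y) ⬝ᵥ x := by
  simp [hIP, dotProduct, mul_comm, frobenius_def]

lemma finrank_hDual_add_le (C : Submodule F4 (Fin n → F4)) :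
    Module.finrank F4 (hDual C) + Module.finrank F4 C ≤ n := by
  set B := Matrix.toBilin' (1 : Matrix (Fin n) (Fin n) F4)
  have hB : B.Nondegenerate :=
    LinearMap.BilinForm.nondegenerate_toBilin'_of_det_ne_zero' _ (by simp)
  -- `hDual C` is the dot-product orthogonal of the conjugate code, which is as large as `C`.
  set D := Submodule.span F4 ((frobenius F4 2 ∘ ·) '' (C : Set (Fin n → F4)))
  have hle : hDual C ≤ B.orthogonal D := fun x hx => by
    have : D ≤ LinearMap.ker (B.flip x) := Submodule.span_le.mpr <| by
      rintro _ ⟨c, hc, rfl⟩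
      simpa [B, Matrix.toBilin'_apply', ← hIP_eq_dotProduct] using hx c hc
    exact LinearMap.BilinForm.mem_orthogonal_iff.mpr fun v hv => this hv
  have hcard : Module.finrank F4 C ≤ Module.finrank F4 D := by
    have hinj : Function.Injective (frobenius F4 2 ∘ · : (Fin n → F4) → _) :=
      (frobenius_inj F4 2).comp_left
    have : Nat.card C ≤ Nat.card D :=
      calc Nat.card C = Nat.card ((frobenius F4 2 ∘ ·) '' (C : Set (Fin n → F4))) :=
            (Nat.card_image_of_injective hinj _).symm
        _ ≤ Nat.card D := Nat.card_mono (Set.toFinite _) Submodule.subset_span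
    rwa [natCard_submodule, natCard_submodule, Nat.pow_le_pow_iff_right (by norm_num)] at this
  have := Submodule.finrank_mono hle
  rw [LinearMap.BilinForm.finrank_orthogonal hB, Module.finrank_fin_fun] at this
  have := Submodule.finrank_le D
  rw [Module.finrank_fin_fun] at this
  omega

lemma eq_hDual_of_le_hDual {C : Submodule F4 (Fin n → F4)} (hC : C ≤ hDual C)
    (hfin : 2 * Module.finrank F4 C = n) : C = hDual C :=
  Submodule.eq_of_le_of_finrank_le hC (by have := finrank_hDual_add_le C; omega)

end HermitianProduct

section Monomial

variable {n : ℕ}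

lemma monomialMap_apply (π : Equiv.Perm (Fin n)) (s : Fin n → F4ˣ) (x : Fin n → F4)
    (i : Fin n) : monomialMap π s x i = s i * x (π i) := rfl

lemma monomialMap_comp (π₁ π₂ : Equiv.Perm (Fin n)) (s₁ s₂ : Fin n → F4ˣ) :
    (monomialMap π₂ s₂).comp (monomialMap π₁ s₁) =
      monomialMap (π₂.trans π₁) (fun i => s₂ i * s₁ (π₂ i)) := by
  ext x i
  simp [monomialMap_apply, mul_assoc]

lemma monomialMap_one : monomialMap (1 : Equiv.Perm (Fin n)) 1 = LinearMap.id := by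
  ext x i
  simp [monomialMap_apply]

lemma map_monomialMap_units_mul (C : Submodule F4 (Fin n → F4)) (π : Equiv.Perm (Fin n))
    (s : Fin n → F4ˣ) (u : F4ˣ) :
    C.map (monomialMap π (fun i => u * s i)) = C.map (monomialMap π s) := by
  have : monomialMap π (fun i => u * s i) = (u : F4) • monomialMap π s := by
    ext x i
    simp [monomialMap_apply, mul_assoc]
  rw [this, Submodule.map_smul _ _ _ u.ne_zero]

lemma codeEquiv_equivalence : Equivalence (CodeEquiv (n := n)) where
  refl C := ⟨1, 1, by rw [monomialMap_one, Submodule.map_id]⟩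
  symm := by
    rintro C C' ⟨π, s, rfl⟩
    refine ⟨π.symm, fun i => (s (π.symm i))⁻¹, ?_⟩
    rw [← Submodule.map_comp, monomialMap_comp]
    simp only [Equiv.symm_trans_self, inv_mul_cancel]
    exact (congrArg (Submodule.map · C) monomialMap_one).trans (Submodule.map_id C)
  trans := by
    rintro C C' C'' ⟨π₁, s₁, rfl⟩ ⟨π₂, s₂, rfl⟩
    exact ⟨_, _, by rw [← monomialMap_comp, Submodule.map_comp]⟩

lemma CodeEquiv.exists_cons_one {C C' : Submodule F4 (Fin (n + 1) → F4)} (h : CodeEquiv C C') :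
    ∃ (π : Equiv.Perm (Fin (n + 1))) (t : Fin n → F4ˣ),
      C.map (monomialMap π (Fin.cons 1 t)) = C' := by
  obtain ⟨π, s, rfl⟩ := h
  refine ⟨π, fun i => (s 0)⁻¹ * s i.succ, ?_⟩
  rw [← map_monomialMap_units_mul C π s (s 0)⁻¹]
  congr 2
  ext i
  refine Fin.cases ?_ (fun _ => ?_) i <;> simp

theorem natCard_le_natCard_quot_codeEquiv_mul (P : Submodule F4 (Fin (n + 1) → F4) → Prop) :
    Nat.card {C // P C} ≤
      Nat.card (Quot fun C C' : {C // P C} => CodeEquiv C.1 C'.1) *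
        ((n + 1).factorial * 3 ^ n) := by
  set r := fun C C' : {C // P C} => CodeEquiv C.1 C'.1
  have hr : Equivalence r := InvImage.equivalence _ _ codeEquiv_equivalence
  have hrep (C : {C // P C}) : ∃ p : Equiv.Perm (Fin (n + 1)) × (Fin n → F4ˣ),
      (Quot.mk r C).out.1.map (monomialMap p.1 (Fin.cons 1 p.2)) = C.1 := by
    have hC : r (Quot.mk r C).out C :=
      hr.eqvGen_iff.mp (Quot.eqvGen_exact (Quot.out_eq (Quot.mk r C)))
    obtain ⟨π, t, h⟩ := CodeEquiv.exists_cons_one hC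
    exact ⟨(π, t), h⟩
  choose p hp using hrep
  have hinj : Function.Injective fun C => (Quot.mk r C, p C) := by
    intro C C' h
    simp only [Prod.mk.injEq] at h
    exact Subtype.ext (by rw [← hp C, ← hp C', h.1, h.2])
  calc Nat.card {C // P C}
      ≤ Nat.card (Quot r × Equiv.Perm (Fin (n + 1)) × (Fin n → F4ˣ)) :=
        Nat.card_le_card_of_injective _ hinj
    _ = Nat.card (Quot r) * ((n + 1).factorial * 3 ^ n) := by
        simp [Nat.card_prod, Fintype.card_perm, Nat.card_fun, Nat.card_units, F4.natCard_eq]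

end Monomial

section HyperbolicPair

variable {n : ℕ} {i j : Fin n}

noncomputable def hypE (i j : Fin n) : Fin n → F4 := Pi.single i 1 + Pi.single j 1

noncomputable def hypF (i j : Fin n) : Fin n → F4 := Pi.single i F4.ω + Pi.single j (F4.ω ^ 2)

lemma hIP_single_add_single (hij : i ≠ j) (a b c d : F4) :
    hIP (Pi.single i a + Pi.single j b) (Pi.single i c + Pi.single j d) =
      a * c ^ 2 + b * d ^ 2 := by
  rw [hIP, Finset.sum_eq_add i j hij (fun k _ hk => by simp [hk.1, hk.2])
    (by simp) (by simp)]
  simp [hij, hij.symm]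

lemma hIP_single_add_single_left {x : Fin n → F4} (hx : x i = 0 ∧ x j = 0) (a b : F4) :
    hIP (Pi.single i a + Pi.single j b) x = 0 := by
  refine hIP_eq_zero_of_disjoint fun k => ?_
  by_cases hi : k = i
  · simp [hi, hx]
  by_cases hj : k = j
  · simp [hj, hx]
  · simp [hi, hj]

lemma hIP_single_add_single_right {x : Fin n → F4} (hx : x i = 0 ∧ x j = 0) (a b : F4) :
    hIP x (Pi.single i a + Pi.single j b) = 0 :=
  hIP_eq_zero_comm.mp (hIP_single_add_single_left hx a b)

lemma hIP_hypE_left {x : Fin n → F4} (hx : x i = 0 ∧ x j = 0) : hIP (hypE i j) x = 0 :=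
  hIP_single_add_single_left hx _ _

lemma hIP_hypE_right {x : Fin n → F4} (hx : x i = 0 ∧ x j = 0) : hIP x (hypE i j) = 0 :=
  hIP_single_add_single_right hx _ _

lemma hIP_hypF_left {x : Fin n → F4} (hx : x i = 0 ∧ x j = 0) : hIP (hypF i j) x = 0 :=
  hIP_single_add_single_left hx _ _

lemma hIP_hypF_right {x : Fin n → F4} (hx : x i = 0 ∧ x j = 0) : hIP x (hypF i j) = 0 :=
  hIP_single_add_single_right hx _ _

lemma hIP_hypE_self (hij : i ≠ j) : hIP (hypE i j) (hypE i j) = 0 := by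
  rw [hypE, hIP_single_add_single hij]
  grind

lemma hIP_hypF_self (hij : i ≠ j) : hIP (hypF i j) (hypF i j) = 0 := by
  rw [hypF, hIP_single_add_single hij]
  have := F4.ω_sq_add_ω
  grind

lemma hIP_hypE_hypF (hij : i ≠ j) : hIP (hypE i j) (hypF i j) = 1 := by
  rw [hypE, hypF, hIP_single_add_single hij]
  have := F4.ω_sq_add_ω
  grind

lemma hIP_hypF_hypE (hij : i ≠ j) : hIP (hypF i j) (hypE i j) = 1 := by
  rw [hypE, hypF, hIP_single_add_single hij]
  simpa [add_comm] using F4.ω_sq_add_ω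

lemma eq_zero_of_add_smul_hypE_add_smul_hypF_mem {W : Submodule F4 (Fin n → F4)}
    (hij : i ≠ j) (hW : ∀ x ∈ W, x i = 0 ∧ x j = 0) {y : Fin n → F4} (hy : y ∈ W) {a b : F4}
    (hmem : y + a • hypE i j + b • hypF i j ∈ W) : a = 0 ∧ b = 0 := by
  have h := hW _ hmem
  simp only [hypE, hypF, Pi.add_apply, Pi.smul_apply, smul_eq_mul, hW y hy, Pi.single_eq_same,
    Pi.single_eq_of_ne hij, Pi.single_eq_of_ne hij.symm] at h
  have := F4.ω_sq_add_ω
  grind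

end HyperbolicPair

section Extension

variable {n : ℕ}

lemma mem_sup_span_singleton {U : Submodule F4 (Fin n → F4)} {v w : Fin n → F4} :
    w ∈ U ⊔ F4 ∙ v ↔ ∃ u ∈ U, ∃ a : F4, u + a • v = w := by
  simp only [Submodule.mem_sup, Submodule.mem_span_singleton]
  constructor
  · rintro ⟨u, hu, _, ⟨a, rfl⟩, rfl⟩
    exact ⟨u, hu, a, rfl⟩
  · rintro ⟨u, hu, a, rfl⟩
    exact ⟨u, hu, _, ⟨a, rfl⟩, rfl⟩

lemma sup_span_singleton_le_hDual {U : Submodule F4 (Fin n → F4)} {v : Fin n → F4}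
    (hU : U ≤ hDual U) (hv : hIP v v = 0) (hUv : ∀ u ∈ U, hIP u v = 0) :
    U ⊔ F4 ∙ v ≤ hDual (U ⊔ F4 ∙ v) := by
  intro w hw w' hw'
  obtain ⟨u, hu, a, rfl⟩ := mem_sup_span_singleton.mp hw
  obtain ⟨u', hu', b, rfl⟩ := mem_sup_span_singleton.mp hw'
  simp only [hIP_add_left, hIP_add_right, hIP_smul_left, hIP_smul_right, hU hu u' hu', hUv u hu,
    hIP_eq_zero_comm.mpr (hUv u' hu'), hv]
  ring

noncomputable def shear (f z : Fin n → F4) : (Fin n → F4) →ₗ[F4] (Fin n → F4) where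
  toFun x := x + hIP x z • f
  map_add' x y := by rw [hIP_add_left, add_smul]; abel
  map_smul' a x := by rw [hIP_smul_left, mul_smul, smul_add]; rfl

lemma shear_apply (f z x : Fin n → F4) : shear f z x = x + hIP x z • f := rfl

lemma hIP_shear_left (f z x y : Fin n → F4) :
    hIP (shear f z x) y = hIP x y + hIP x z * hIP f y := by
  rw [shear_apply, hIP_add_left, hIP_smul_left]

lemma hIP_shear_right (f z x y : Fin n → F4) :
    hIP x (shear f z y) = hIP x y + hIP y z ^ 2 * hIP x f := by
  rw [shear_apply, hIP_add_right, hIP_smul_right]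

lemma shear_shear {f z : Fin n → F4} (hfz : hIP f z = 0) (x : Fin n → F4) :
    shear f z (shear f z x) = x := by
  rw [shear_apply, hIP_shear_left, hfz, mul_zero, add_zero, shear_apply, add_assoc, ← add_smul,
    CharTwo.add_self_eq_zero, zero_smul, add_zero]

end Extension

structure IsIsotropicIn {n : ℕ} (W : Submodule F4 (Fin n → F4)) (d : ℕ)
    (C : Submodule F4 (Fin n → F4)) : Prop where
  le : C ≤ W
  le_hDual : C ≤ hDual C
  finrank_eq : Module.finrank F4 C = d

noncomputable def shearExtension {n : ℕ} (i j : Fin n) (C : Submodule F4 (Fin n → F4))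
    (z : Fin n → F4) (c : F4) : Submodule F4 (Fin n → F4) :=
  C.map (shear (hypF i j) z) ⊔ F4 ∙ (hypE i j + z + c • hypF i j)

section Step

variable {n d : ℕ} {i j : Fin n} {W W' C : Submodule F4 (Fin n → F4)}

lemma hIP_hypE_add_add_smul_hypF (hij : i ≠ j) {z : Fin n → F4} (hz : z i = 0 ∧ z j = 0)
    (c : F4) : hIP (hypE i j + z + c • hypF i j) (hypF i j) = 1 := by
  rw [hIP_add_left, hIP_add_left, hIP_smul_left, hIP_hypE_hypF hij,
    hIP_hypF_right hz, hIP_hypF_self hij]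
  ring

lemma isIsotropicIn_sup_hypF (hij : i ≠ j) (hW : ∀ x ∈ W, x i = 0 ∧ x j = 0) (hWW' : W ≤ W')
    (hf : hypF i j ∈ W') (hC : IsIsotropicIn W d C) :
    IsIsotropicIn W' (d + 1) (C ⊔ F4 ∙ hypF i j) where
  le := sup_le (hC.le.trans hWW') ((Submodule.span_singleton_le_iff_mem _ _).mpr hf)
  le_hDual := sup_span_singleton_le_hDual hC.le_hDual (hIP_hypF_self hij)
    fun u hu => hIP_hypF_right (hW u (hC.le hu))
  finrank_eq := by
    rw [Submodule.finrank_sup_span_singleton, hC.finrank_eq]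
    intro hfC
    have := hIP_hypE_right (hW _ (hC.le hfC))
    rw [hIP_hypF_hypE hij] at this
    exact one_ne_zero this

lemma shearExtension_le_hDual (hij : i ≠ j) (hW : ∀ x ∈ W, x i = 0 ∧ x j = 0) (hCW : C ≤ W)
    (hC : C ≤ hDual C) {z : Fin n → F4} (hz : z ∈ W) {c : F4} (hc : c ^ 2 + c = hIP z z) :
    shearExtension i j C z c ≤ hDual (shearExtension i j C z c) := by
  have hxf {x} (hx : x ∈ C) := hIP_hypF_right (hW x (hCW hx))
  have hfx {x} (hx : x ∈ C) := hIP_hypF_left (hW x (hCW hx))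
  have hxe {x} (hx : x ∈ C) := hIP_hypE_right (hW x (hCW hx))
  refine sup_span_singleton_le_hDual ?_ ?_ ?_
  · rintro _ ⟨x, hx, rfl⟩ _ ⟨y, hy, rfl⟩
    rw [hIP_shear_left, hIP_shear_right, hIP_shear_right, hC hx y hy, hxf hx, hfx hy,
      hIP_hypF_self hij]
    ring
  · simp only [hIP_add_left, hIP_add_right, hIP_smul_left, hIP_smul_right, hIP_hypE_self hij,
      hIP_hypE_hypF hij, hIP_hypF_hypE hij, hIP_hypF_self hij, hIP_hypE_left (hW z hz),
      hIP_hypE_right (hW z hz), hIP_hypF_left (hW z hz), hIP_hypF_right (hW z hz)]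
    grind
  · rintro _ ⟨x, hx, rfl⟩
    simp only [hIP_shear_left, hIP_add_right, hIP_smul_right, hxe hx, hxf hx, hIP_hypF_hypE hij,
      hIP_hypF_left (hW z hz), hIP_hypF_self hij]
    grind

lemma finrank_shearExtension (hij : i ≠ j) (hW : ∀ x ∈ W, x i = 0 ∧ x j = 0) (hCW : C ≤ W)
    {z : Fin n → F4} (hz : z ∈ W) (c : F4) :
    Module.finrank F4 (shearExtension i j C z c) = Module.finrank F4 C + 1 := by
  have hinj : Function.Injective (shear (hypF i j) z) :=
    Function.LeftInverse.injective (shear_shear (hIP_hypF_left (hW z hz)))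
  rw [shearExtension, Submodule.finrank_sup_span_singleton,
    ← (Submodule.equivMapOfInjective _ hinj C).finrank_eq]
  rintro ⟨x, hx, hgx⟩
  have := congrArg (hIP · (hypF i j)) hgx
  simp only [hIP_shear_left, hIP_hypF_right (hW x (hCW hx)), hIP_hypF_self hij, mul_zero,
    add_zero, hIP_hypE_add_add_smul_hypF hij (hW z hz)] at this
  exact zero_ne_one this

lemma isIsotropicIn_shearExtension (hij : i ≠ j) (hW : ∀ x ∈ W, x i = 0 ∧ x j = 0)
    (hWW' : W ≤ W') (he : hypE i j ∈ W') (hf : hypF i j ∈ W') (hC : IsIsotropicIn W d C)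
    {z : Fin n → F4} (hz : z ∈ W) {c : F4} (hc : c ^ 2 + c = hIP z z) :
    IsIsotropicIn W' (d + 1) (shearExtension i j C z c) where
  le := by
    refine sup_le ?_ ((Submodule.span_singleton_le_iff_mem _ _).mpr
      (W'.add_mem (W'.add_mem he (hWW' hz)) (W'.smul_mem _ hf)))
    rintro _ ⟨x, hx, rfl⟩
    exact W'.add_mem (hWW' (hC.le hx)) (W'.smul_mem _ hf)
  le_hDual := shearExtension_le_hDual hij hW hC.le hC.le_hDual hz hc
  finrank_eq := by rw [finrank_shearExtension hij hW hC.le hz, hC.finrank_eq]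

end Step

section Recovery

variable {n : ℕ} {i j : Fin n} {W C : Submodule F4 (Fin n → F4)}

lemma sup_span_hypF_inf (hij : i ≠ j) (hW : ∀ x ∈ W, x i = 0 ∧ x j = 0) (hC : C ≤ W) :
    (C ⊔ F4 ∙ hypF i j) ⊓ W = C := by
  refine le_antisymm ?_ (le_inf le_sup_left hC)
  rintro _ ⟨hw, hwW⟩
  obtain ⟨x, hx, a, rfl⟩ := mem_sup_span_singleton.mp hw
  have := eq_zero_of_add_smul_hypE_add_smul_hypF_mem hij hW (hC hx) (a := 0) (b := a)
    (by simpa using hwW)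
  simpa [this.2] using hx

lemma shearExtension_sup_span_hypF_inf (hij : i ≠ j) (hW : ∀ x ∈ W, x i = 0 ∧ x j = 0)
    (hC : C ≤ W) {z : Fin n → F4} (hz : z ∈ W) (c : F4) :
    (shearExtension i j C z c ⊔ F4 ∙ hypF i j) ⊓ W = C := by
  refine le_antisymm ?_ (le_inf (fun x hx => mem_sup_span_singleton.mpr ?_) hC)
  · rintro _ ⟨hw, hwW⟩
    obtain ⟨_, hu, b, rfl⟩ := mem_sup_span_singleton.mp hw
    obtain ⟨_, ⟨x, hx, rfl⟩, a, rfl⟩ := mem_sup_span_singleton.mp hu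
    have hw : shear (hypF i j) z x + a • (hypE i j + z + c • hypF i j) + b • hypF i j =
        (x + a • z) + a • hypE i j + (hIP x z + a * c + b) • hypF i j := by
      rw [shear_apply]
      module
    rw [hw] at hwW ⊢
    obtain ⟨rfl, hcoef⟩ := eq_zero_of_add_smul_hypE_add_smul_hypF_mem hij hW
      (W.add_mem (hC hx) (W.smul_mem _ hz)) hwW
    rw [hcoef]
    simpa using hx
  · refine ⟨shear (hypF i j) z x, Submodule.mem_sup_left (Submodule.mem_map_of_mem hx),
      hIP x z, ?_⟩
    rw [shear_apply, add_assoc, ← add_smul, CharTwo.add_self_eq_zero, zero_smul, add_zero]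

lemma sup_span_hypF_ne_shearExtension (hij : i ≠ j) (C' : Submodule F4 (Fin n → F4))
    {z : Fin n → F4} (hz : z i = 0 ∧ z j = 0) {c : F4}
    (hL : shearExtension i j C z c ≤ hDual (shearExtension i j C z c)) :
    C' ⊔ F4 ∙ hypF i j ≠ shearExtension i j C z c := by
  intro h
  have hf : hypF i j ∈ shearExtension i j C z c :=
    h ▸ Submodule.mem_sup_right (Submodule.mem_span_singleton_self _)
  have hg : hypE i j + z + c • hypF i j ∈ shearExtension i j C z c :=
    Submodule.mem_sup_right (Submodule.mem_span_singleton_self _)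
  have := hL hg _ hf
  rw [hIP_hypE_add_add_smul_hypF hij hz] at this
  exact one_ne_zero this

lemma eq_of_shearExtension_eq (hij : i ≠ j) (hW : ∀ x ∈ W, x i = 0 ∧ x j = 0) (hC : C ≤ W)
    {z z' : Fin n → F4} (hz : z ∈ W) (hz' : z' ∈ W) {c c' : F4}
    (h : shearExtension i j C z c = shearExtension i j C z' c') :
    z' - z ∈ C ∧ c' = c + hIP (z' - z) z := by
  have hg' : hypE i j + z' + c' • hypF i j ∈ shearExtension i j C z c :=
    h ▸ Submodule.mem_sup_right (Submodule.mem_span_singleton_self _)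
  obtain ⟨_, ⟨x, hx, rfl⟩, a, hsum⟩ := mem_sup_span_singleton.mp hg'
  have ha : a = 1 := by
    have := congrArg (hIP · (hypF i j)) hsum
    simp only [hIP_add_left, hIP_smul_left, hIP_shear_left, hIP_hypF_self hij,
      hIP_hypE_add_add_smul_hypF hij (hW _ hz), hIP_hypE_add_add_smul_hypF hij (hW _ hz'),
      hIP_hypF_right (hW x (hC hx))] at this
    simpa using this
  subst ha
  have hzero : (x + z - z') + (0 : F4) • hypE i j + (hIP x z + c - c') • hypF i j = 0 := by
    rw [shear_apply] at hsum
    linear_combination (norm := module) hsum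
  have hy : x + z - z' ∈ W := W.sub_mem (W.add_mem (hC hx) hz) hz'
  obtain ⟨-, hcoef⟩ :=
    eq_zero_of_add_smul_hypE_add_smul_hypF_mem hij hW hy (hzero ▸ W.zero_mem)
  rw [hcoef, zero_smul, zero_smul, add_zero, add_zero] at hzero
  have hx' : x = z' - z := by linear_combination (norm := module) hzero
  subst hx'
  refine ⟨hx, ?_⟩
  linear_combination (norm := ring_nf) -hcoef

end Recovery

section Count

variable {n d : ℕ} {i j : Fin n} {W W' C : Submodule F4 (Fin n → F4)}

lemma natCard_quotient_comap_subtype (hC : C ≤ W) :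
    Nat.card (W ⧸ C.comap W.subtype) = 4 ^ (Module.finrank F4 W - Module.finrank F4 C) := by
  rw [Module.natCard_eq_pow_finrank (K := F4), F4.natCard_eq]
  have := Submodule.finrank_quotient_add_finrank (C.comap W.subtype)
  rw [(Submodule.comapSubtypeEquivOfLe hC).finrank_eq] at this
  rw [← this, Nat.add_sub_cancel]

noncomputable def quotRep (q : W ⧸ C.comap W.subtype) : Fin n → F4 := (Quotient.out q : W)

lemma quotRep_mem (q : W ⧸ C.comap W.subtype) : quotRep q ∈ W := (Quotient.out q).2

lemma eq_of_quotRep_sub_mem {q q' : W ⧸ C.comap W.subtype} (h : quotRep q' - quotRep q ∈ C) :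
    q = q' := by
  have : (Quotient.out q : W) - Quotient.out q' ∈ C.comap W.subtype := by
    rw [← Submodule.neg_mem_iff, neg_sub]
    exact h
  rw [← Quotient.out_eq q, ← Quotient.out_eq q']
  exact (Submodule.Quotient.eq _).mpr this

instance (W C : Submodule F4 (Fin n → F4)) : Finite (W ⧸ C.comap W.subtype) :=
  Module.finite_of_finite F4

noncomputable def ExtensionData (W : Submodule F4 (Fin n → F4)) (d : ℕ) : Type :=
  Σ C : {C // IsIsotropicIn W d C},
    Option (Σ q : W ⧸ C.1.comap W.subtype, {c : F4 // c ^ 2 + c = hIP (quotRep q) (quotRep q)})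

noncomputable def ExtensionData.extend (i j : Fin n) :
    ExtensionData W d → Submodule F4 (Fin n → F4)
  | ⟨C, none⟩ => C.1 ⊔ F4 ∙ hypF i j
  | ⟨C, some ⟨q, c⟩⟩ => shearExtension i j C.1 (quotRep q) c

lemma ExtensionData.isIsotropicIn_extend (hij : i ≠ j) (hW : ∀ x ∈ W, x i = 0 ∧ x j = 0)
    (hWW' : W ≤ W') (he : hypE i j ∈ W') (hf : hypF i j ∈ W') :
    ∀ D : ExtensionData W d, IsIsotropicIn W' (d + 1) (D.extend i j)
  | ⟨C, none⟩ => isIsotropicIn_sup_hypF hij hW hWW' hf C.2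
  | ⟨C, some ⟨q, c⟩⟩ => isIsotropicIn_shearExtension hij hW hWW' he hf C.2 (quotRep_mem q) c.2

lemma ExtensionData.extend_injective (hij : i ≠ j) (hW : ∀ x ∈ W, x i = 0 ∧ x j = 0) :
    Function.Injective (ExtensionData.extend (W := W) (d := d) i j) := by
  have hne (C C' : {C // IsIsotropicIn W d C}) (q : W ⧸ C.1.comap W.subtype) {c : F4}
      (hc : c ^ 2 + c = hIP (quotRep q) (quotRep q)) :
      C'.1 ⊔ F4 ∙ hypF i j ≠ shearExtension i j C.1 (quotRep q) c :=
    sup_span_hypF_ne_shearExtension hij C'.1 (hW _ (quotRep_mem q))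
      (shearExtension_le_hDual hij hW C.2.le C.2.le_hDual (quotRep_mem q) hc)
  rintro ⟨C, _ | ⟨q, c⟩⟩ ⟨C', _ | ⟨q', c'⟩⟩ h <;> simp only [ExtensionData.extend] at h
  · obtain rfl : C = C' := Subtype.ext <| by
      rw [← sup_span_hypF_inf hij hW C.2.le, h, sup_span_hypF_inf hij hW C'.2.le]
    rfl
  · exact absurd h (hne C' C q' c'.2)
  · exact absurd h.symm (hne C C' q c.2)
  · obtain rfl : C = C' := Subtype.ext <| by
      rw [← shearExtension_sup_span_hypF_inf hij hW C.2.le (quotRep_mem q) c, h,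
        shearExtension_sup_span_hypF_inf hij hW C'.2.le (quotRep_mem q') c']
    obtain ⟨hsub, hcc⟩ :=
      eq_of_shearExtension_eq hij hW C.2.le (quotRep_mem q) (quotRep_mem q') h
    obtain rfl := eq_of_quotRep_sub_mem hsub
    obtain rfl : c = c' := Subtype.ext (by simpa [hIP_zero_left] using hcc.symm)
    rfl

lemma natCard_extensionData :
    Nat.card (ExtensionData W d) =
      Nat.card {C // IsIsotropicIn W d C} * (2 * 4 ^ (Module.finrank F4 W - d) + 1) := by
  have := Fintype.ofFinite {C // IsIsotropicIn W d C}
  rw [ExtensionData, Nat.card_sigma, Nat.card_eq_fintype_card, ← smul_eq_mul,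
    ← Finset.card_univ, ← Finset.sum_const]
  refine Finset.sum_congr rfl fun C _ => ?_
  have := Fintype.ofFinite (W ⧸ C.1.comap W.subtype)
  rw [Finite.card_option, Nat.card_sigma, Finset.sum_congr rfl fun q _ =>
    F4.card_sq_add_self_eq (hIP_self_sq (quotRep q)), Finset.sum_const, Finset.card_univ,
    ← Nat.card_eq_fintype_card, natCard_quotient_comap_subtype C.2.le, C.2.finrank_eq,
    smul_eq_mul, mul_comm]

theorem natCard_isIsotropicIn_mul_le (hij : i ≠ j) (hW : ∀ x ∈ W, x i = 0 ∧ x j = 0)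
    (hWW' : W ≤ W') (he : hypE i j ∈ W') (hf : hypF i j ∈ W') :
    Nat.card {C // IsIsotropicIn W d C} * (2 * 4 ^ (Module.finrank F4 W - d) + 1) ≤
      Nat.card {L // IsIsotropicIn W' (d + 1) L} :=
  natCard_extensionData (W := W) ▸ Nat.card_le_card_of_injective
    (fun D => ⟨D.extend i j, D.isIsotropicIn_extend hij hW hWW' he hf⟩)
    fun _ _ h => ExtensionData.extend_injective hij hW (congrArg Subtype.val h)

end Count

section Flag

variable {n : ℕ}

noncomputable def supportedBelow (k : ℕ) : Submodule F4 (Fin n → F4) :=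
  ⨅ i ∈ {i : Fin n | k ≤ (i : ℕ)}, LinearMap.ker (LinearMap.proj i)

lemma mem_supportedBelow {k : ℕ} {x : Fin n → F4} :
    x ∈ supportedBelow k ↔ ∀ i : Fin n, k ≤ (i : ℕ) → x i = 0 := by
  simp [supportedBelow]

lemma finrank_supportedBelow {k : ℕ} (hk : k ≤ n) :
    Module.finrank F4 (supportedBelow (n := n) k) = k := by
  refine (LinearMap.iInfKerProjEquiv F4 (fun _ : Fin n => F4) (I := {i | (i : ℕ) < k})
    (J := {i | k ≤ (i : ℕ)}) (Set.disjoint_left.mpr fun i hi hi' => by simp_all; omega)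
    (fun i _ => by simp; omega)).finrank_eq.trans ?_
  simp [Fin.card_filter_val_lt, hk]

lemma supportedBelow_mono {k k' : ℕ} (h : k ≤ k') :
    supportedBelow (n := n) k ≤ supportedBelow k' := fun _ hx =>
  mem_supportedBelow.mpr fun i hi => mem_supportedBelow.mp hx i (h.trans hi)

lemma single_add_single_mem_supportedBelow {k : ℕ} {i j : Fin n} (hi : (i : ℕ) < k)
    (hj : (j : ℕ) < k) (a b : F4) : Pi.single i a + Pi.single j b ∈ supportedBelow k :=
  mem_supportedBelow.mpr fun l hl => by
    have hli : l ≠ i := fun h => by subst h; omega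
    have hlj : l ≠ j := fun h => by subst h; omega
    simp [hli, hlj]

theorem prod_le_natCard_isIsotropicIn (m : ℕ) (hm : 2 * m ≤ n) :
    ∏ l ∈ Finset.range m, (2 ^ (2 * l + 1) + 1) ≤
      Nat.card {C // IsIsotropicIn (supportedBelow (n := n) (2 * m)) m C} := by
  induction m with
  | zero =>
    have : Nonempty {C // IsIsotropicIn (supportedBelow (n := n) 0) 0 C} :=
      ⟨⊥, bot_le, fun x hx => by simp [(Submodule.mem_bot F4).mp hx], finrank_bot _ _⟩
    rw [Finset.prod_range_zero]
    exact Nat.card_pos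
  | succ m ih =>
    let i : Fin n := ⟨2 * m, by omega⟩
    let j : Fin n := ⟨2 * m + 1, by omega⟩
    have hW : ∀ x ∈ supportedBelow (2 * m), x i = 0 ∧ x j = 0 := fun x hx =>
      ⟨mem_supportedBelow.mp hx i le_rfl, mem_supportedBelow.mp hx j (Nat.le_succ _)⟩
    have hstep := natCard_isIsotropicIn_mul_le (d := m) (W' := supportedBelow (2 * (m + 1)))
      (i := i) (j := j) (by simp [i, j, Fin.ext_iff]) hW (supportedBelow_mono (by omega))
      (single_add_single_mem_supportedBelow (by simp [i]) (by simp [j]; omega) _ _)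
      (single_add_single_mem_supportedBelow (by simp [i]) (by simp [j]; omega) _ _)
    rw [finrank_supportedBelow (by omega), show 2 * m - m = m by omega] at hstep
    calc ∏ l ∈ Finset.range (m + 1), (2 ^ (2 * l + 1) + 1)
        = (∏ l ∈ Finset.range m, (2 ^ (2 * l + 1) + 1)) * (2 * 4 ^ m + 1) := by
          rw [Finset.prod_range_succ, pow_succ, pow_mul]
          ring
      _ ≤ _ := (Nat.mul_le_mul_right _ (ih (by omega))).trans hstep

theorem prod_le_natCard_selfDual (k : ℕ) :
    ∏ l ∈ Finset.range k, (2 ^ (2 * l + 1) + 1) ≤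
      Nat.card {C : Submodule F4 (Fin (2 * k) → F4) // C = hDual C} :=
  (prod_le_natCard_isIsotropicIn k le_rfl).trans <| Nat.card_le_card_of_injective
    (fun C => ⟨C.1, eq_hDual_of_le_hDual C.2.le_hDual (by rw [C.2.finrank_eq])⟩)
    fun _ _ h => Subtype.ext (congrArg Subtype.val h :)

end Flag

/-- The number of equivalence classes of Hermitian self-dual codes of length 22
is at least `∏_{i=0}^{10}(2^{2i+1}+1) / (22! · 3^{21})`, a quantity exceeding 397588. -/
theorem stmt12 :
    (397588 : ℚ) <
      (∏ i ∈ Finset.range 11, (2 ^ (2 * i + 1) + 1) : ℚ) /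
        ((Nat.factorial 22 : ℚ) * 3 ^ 21) ∧
    (∏ i ∈ Finset.range 11, (2 ^ (2 * i + 1) + 1) : ℚ) /
        ((Nat.factorial 22 : ℚ) * 3 ^ 21) ≤
      (Nat.card (Quot (fun C C' : {C : Submodule F4 (Fin 22 → F4) // C = hDual C} =>
        CodeEquiv C.1 C'.1)) : ℚ) := by
  have hcount : ∏ i ∈ Finset.range 11, (2 ^ (2 * i + 1) + 1) ≤
      Nat.card (Quot (fun C C' : {C : Submodule F4 (Fin 22 → F4) // C = hDual C} =>
        CodeEquiv C.1 C'.1)) * (Nat.factorial 22 * 3 ^ 21) :=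
    (prod_le_natCard_selfDual 11).trans (natCard_le_natCard_quot_codeEquiv_mul (n := 21) _)
  refine ⟨by norm_num [Finset.prod_range_succ, Nat.factorial], ?_⟩
  rw [div_le_iff₀ (by positivity)]
  exact_mod_cast hcount
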